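/- Let (X,Ω) be a measurable space with X nonempty, E a Dedekind complete Banach lattice, and fix x ∈ X. For e ∈ E define the measure μ_e by μ_e(Δ) = e if x ∈ Δ and 0 otherwise. Then the map ψ : e ↦ μ_e is an isometric vector lattice homomorphism from E into the vector lattice M(X,Ω,E) of E-valued measures equipped with the norm ‖μ‖ = ‖|μ|(X)‖, and its image is a band in M(X,Ω,E). -/

import Mathlib

open scoped Classical

variable {X : Type*} [MeasurableSpace X]
variable {E : Type*} [NormedAddCommGroup E] [Lattice E] [HasSolidNorm E]
  [IsOrderedAddMonoid E] [NormedSpace ℝ E]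
  [CompleteSpace E]

/-- A finite `E⁺`-valued measure. -/
def IsFinMeasure (μ : Set X → E) : Prop :=
  μ ∅ = 0 ∧ (∀ Δ, MeasurableSet Δ → 0 ≤ μ Δ) ∧
    ∀ Δ : ℕ → Set X, (∀ n, MeasurableSet (Δ n)) →
      Pairwise (Function.onFun Disjoint Δ) →
      IsLUB (Set.range fun N => ∑ n ∈ Finset.range N, μ (Δ n))
        (μ (⋃ n, Δ n))

/-- Membership in `M(X,Ω,E)`, the span of the finite `E⁺`-valued measures. -/
def InSpanMeasures (μ : Set X → E) : Prop :=
  ∃ μ₁ μ₂ : Set X → E, IsFinMeasure μ₁ ∧ IsFinMeasure μ₂ ∧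
    ∀ Δ, MeasurableSet Δ → μ Δ = μ₁ Δ - μ₂ Δ

/-- The pointwise order on `M(X,Ω,E)`. -/
def MeasLE (μ ν : Set X → E) : Prop :=
  ∀ Δ, MeasurableSet Δ → μ Δ ≤ ν Δ

/-- The point-mass-like measure `μ_e` at a fixed point `x`. -/
noncomputable def psiMeas (x : X) (e : E) : Set X → E :=
  fun Δ => if x ∈ Δ then e else 0

/-! `ψ(e)` is the Dirac mass at `x` with weight `e`, so linearity, the lattice operations and the
norm are all read off at sets containing `x`. For the band property, the key observation is that
an element `ν` of `M(X,Ω,E)` vanishing on every measurable set avoiding `x` equals `ψ(ν(X))`, by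
finite additivity `ν(X) = ν(Δ) + ν(Δᶜ)`. An element between `0` and `ψ(e)` clearly vanishes off
`x`; a supremum `ξ` of elements of the image does too, being squeezed between one of them and the
upper bound `ψ(ξ(X))` of the family. -/

lemma isGreatest_range_sum_range {M : Type*} [AddCommMonoid M] [PartialOrder M]
    [IsOrderedAddMonoid M] {u : ℕ → M} (hu : ∀ n, 0 ≤ u n) {N : ℕ} (hN : ∀ n ≥ N, u n = 0) :
    IsGreatest (Set.range fun n => ∑ k ∈ Finset.range n, u k) (∑ k ∈ Finset.range N, u k) := by
  refine ⟨⟨N, rfl⟩, ?_⟩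
  rintro _ ⟨n, rfl⟩
  calc ∑ k ∈ Finset.range n, u k ≤ ∑ k ∈ Finset.range (max n N), u k :=
        Finset.sum_le_sum_of_subset_of_nonneg (by gcongr; exact le_max_left _ _)
          fun k _ _ => hu k
    _ = ∑ k ∈ Finset.range N, u k := Finset.eventually_constant_sum hN (le_max_right _ _)

section PointMass

variable {X E : Type*} [NormedAddCommGroup E] {x : X} {Δ : Set X}

@[simp]
lemma psiMeas_of_mem (h : x ∈ Δ) (e : E) : psiMeas x e Δ = e := if_pos h

@[simp]
lemma psiMeas_of_notMem (h : x ∉ Δ) (e : E) : psiMeas x e Δ = 0 := if_neg h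

lemma psiMeas_add (x : X) (e f : E) (Δ : Set X) :
    psiMeas x (e + f) Δ = psiMeas x e Δ + psiMeas x f Δ := by
  by_cases h : x ∈ Δ <;> simp [h]

lemma psiMeas_smul {R : Type*} [SMulZeroClass R E] (x : X) (c : R) (e : E) (Δ : Set X) :
    psiMeas x (c • e) Δ = c • psiMeas x e Δ := by
  by_cases h : x ∈ Δ <;> simp [h]

variable [Lattice E]

lemma psiMeas_nonneg {e : E} (he : 0 ≤ e) (Δ : Set X) : 0 ≤ psiMeas x e Δ := by
  by_cases h : x ∈ Δ <;> simp [h, he]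

lemma psiMeas_le_psiMeas {e f : E} (hef : e ≤ f) (Δ : Set X) :
    psiMeas x e Δ ≤ psiMeas x f Δ := by
  by_cases h : x ∈ Δ <;> simp [h, hef]

variable [MeasurableSpace X]

lemma psiMeas_sup_le {e f : E} {ρ : Set X → E} (he : MeasLE (psiMeas x e) ρ)
    (hf : MeasLE (psiMeas x f) ρ) : MeasLE (psiMeas x (e ⊔ f)) ρ := by
  intro Δ hΔ
  by_cases h : x ∈ Δ
  · simpa [h] using sup_le (by simpa [h] using he Δ hΔ) (by simpa [h] using hf Δ hΔ)
  · simpa [h] using he Δ hΔ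

variable [IsOrderedAddMonoid E]

lemma isFinMeasure_psiMeas (x : X) {a : E} (ha : 0 ≤ a) : IsFinMeasure (psiMeas x a) := by
  refine ⟨by simp, fun Δ _ => psiMeas_nonneg ha Δ, fun Δ _ hΔ => ?_⟩
  have hu : ∀ n, 0 ≤ psiMeas x a (Δ n) := fun n => psiMeas_nonneg ha _
  by_cases hx : ∃ m, x ∈ Δ m
  · obtain ⟨m, hm⟩ := hx
    have hzero : ∀ n ≠ m, psiMeas x a (Δ n) = 0 := fun n hn =>
      psiMeas_of_notMem (Set.disjoint_right.1 (hΔ hn) hm) a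
    have hsum : ∑ n ∈ Finset.range (m + 1), psiMeas x a (Δ n) = a := by
      rw [Finset.sum_eq_single_of_mem m (by simp) fun n _ => hzero n, psiMeas_of_mem hm]
    have hlub := (isGreatest_range_sum_range (N := m + 1) hu fun n hn => hzero n (by omega)).isLUB
    rw [hsum] at hlub
    rwa [psiMeas_of_mem (Set.mem_iUnion_of_mem m hm)]
  · simp only [not_exists] at hx
    rw [psiMeas_of_notMem (by simpa using hx)]
    exact (isGreatest_range_sum_range (N := 0) hu fun n _ => psiMeas_of_notMem (hx n) a).isLUB

lemma inSpanMeasures_psiMeas (x : X) (e : E) : InSpanMeasures (psiMeas x e) :=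
  ⟨psiMeas x e⁺, psiMeas x e⁻, isFinMeasure_psiMeas x (posPart_nonneg e),
    isFinMeasure_psiMeas x (negPart_nonneg e), fun Δ _ => by
      by_cases h : x ∈ Δ <;> simp [h, posPart_sub_negPart]⟩

end PointMass

section FiniteAdditivity

variable {X E : Type*} [MeasurableSpace X] [NormedAddCommGroup E] [Lattice E]
  [IsOrderedAddMonoid E]

lemma IsFinMeasure.union {μ : Set X → E} (hμ : IsFinMeasure μ) {A B : Set X}
    (hA : MeasurableSet A) (hB : MeasurableSet B) (hAB : Disjoint A B) :
    μ (A ∪ B) = μ A + μ B := by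
  obtain ⟨hempty, hnonneg, hσ⟩ := hμ
  let Δ : ℕ → Set X := fun n => if n = 0 then A else if n = 1 then B else ∅
  have hmeas : ∀ n, MeasurableSet (Δ n) := by
    intro n; dsimp only [Δ]; split_ifs <;> simp [hA, hB]
  have hdisj : Pairwise (Function.onFun Disjoint Δ) := by
    intro m n hmn
    rcases m with _ | _ | m <;> rcases n with _ | _ | n <;>
      simp_all [Function.onFun, Δ, hAB.symm]
  have hunion : ⋃ n, Δ n = A ∪ B := by
    ext y
    simp only [Set.mem_iUnion, Set.mem_union]
    constructor
    · rintro ⟨n, hn⟩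
      dsimp only [Δ] at hn
      split_ifs at hn <;> simp_all
    · rintro (hy | hy)
      exacts [⟨0, by simpa [Δ]⟩, ⟨1, by simpa [Δ]⟩]
  have hlub := hσ Δ hmeas hdisj
  rw [hunion] at hlub
  refine hlub.unique ?_
  have := (isGreatest_range_sum_range (fun n => hnonneg _ (hmeas n)) (N := 2)
    fun n hn => by simp [Δ, show n ≠ 0 by omega, show n ≠ 1 by omega, hempty]).isLUB
  simpa [Finset.sum_range_succ, Δ] using this

end FiniteAdditivity

section Span

variable {X E : Type*} [MeasurableSpace X] [NormedAddCommGroup E] [Lattice E]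
  [IsOrderedAddMonoid E] {ν : Set X → E} {x : X}

lemma InSpanMeasures.apply_univ (hν : InSpanMeasures ν) {Δ : Set X} (hΔ : MeasurableSet Δ) :
    ν Set.univ = ν Δ + ν Δᶜ := by
  obtain ⟨μ₁, μ₂, h₁, h₂, hν⟩ := hν
  rw [hν _ MeasurableSet.univ, hν _ hΔ, hν _ hΔ.compl, ← Set.union_compl_self Δ,
    h₁.union hΔ hΔ.compl disjoint_compl_right, h₂.union hΔ hΔ.compl disjoint_compl_right]
  abel

lemma InSpanMeasures.eq_psiMeas (hν : InSpanMeasures ν)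
    (hν₀ : ∀ Δ, MeasurableSet Δ → x ∉ Δ → ν Δ = 0) :
    ∀ Δ, MeasurableSet Δ → ν Δ = psiMeas x (ν Set.univ) Δ := by
  intro Δ hΔ
  by_cases hx : x ∈ Δ
  · rw [psiMeas_of_mem hx, hν.apply_univ hΔ, hν₀ Δᶜ hΔ.compl (by simpa using hx), add_zero]
  · rw [psiMeas_of_notMem hx, hν₀ Δ hΔ hx]

lemma InSpanMeasures.exists_eq_psiMeas_of_le (hν : InSpanMeasures ν) {e : E}
    (hle : ∀ Δ, MeasurableSet Δ → 0 ≤ ν Δ ∧ ν Δ ≤ psiMeas x e Δ) :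
    ∃ f : E, ∀ Δ, MeasurableSet Δ → ν Δ = psiMeas x f Δ :=
  ⟨ν Set.univ, hν.eq_psiMeas fun Δ hΔ hx =>
    le_antisymm (by simpa [hx] using (hle Δ hΔ).2) (hle Δ hΔ).1⟩

lemma InSpanMeasures.exists_eq_psiMeas_of_isLUB {D : Set (Set X → E)} (hD : D.Nonempty)
    (hDψ : ∀ ρ ∈ D, ∃ f : E, ∀ Δ, MeasurableSet Δ → ρ Δ = psiMeas x f Δ)
    {ξ : Set X → E} (hξ : InSpanMeasures ξ) (hub : ∀ ρ ∈ D, MeasLE ρ ξ)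
    (hlub : ∀ σ, InSpanMeasures σ → (∀ ρ ∈ D, MeasLE ρ σ) → MeasLE ξ σ) :
    ∃ g : E, ∀ Δ, MeasurableSet Δ → ξ Δ = psiMeas x g Δ := by
  obtain ⟨ρ₀, hρ₀⟩ := hD
  obtain ⟨f₀, hf₀⟩ := hDψ ρ₀ hρ₀
  have hψub : ∀ ρ ∈ D, MeasLE ρ (psiMeas x (ξ Set.univ)) := by
    intro ρ hρ Δ hΔ
    obtain ⟨f, hf⟩ := hDψ ρ hρ
    by_cases hx : x ∈ Δ
    · have hfξ := hub ρ hρ _ MeasurableSet.univ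
      rw [hf _ MeasurableSet.univ, psiMeas_of_mem (Set.mem_univ x)] at hfξ
      rwa [hf Δ hΔ, psiMeas_of_mem hx, psiMeas_of_mem hx]
    · simp [hf Δ hΔ, hx]
  refine ⟨ξ Set.univ, hξ.eq_psiMeas fun Δ hΔ hx => le_antisymm ?_ ?_⟩
  · simpa [hx] using hlub _ (inSpanMeasures_psiMeas x _) hψub Δ hΔ
  · simpa [hf₀ Δ hΔ, hx] using hub ρ₀ hρ₀ Δ hΔ

end Span

theorem stmt_18_general
    (x : X) :
    -- `ψ` maps into `M(X,Ω,E)` and is linear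
    (∀ e : E, InSpanMeasures (psiMeas x e)) ∧
    (∀ e f : E, ∀ Δ : Set X,
      psiMeas x (e + f) Δ = psiMeas x e Δ + psiMeas x f Δ) ∧
    (∀ (c : ℝ) (e : E) (Δ : Set X), psiMeas x (c • e) Δ = c • psiMeas x e Δ) ∧
    -- `ψ` is a lattice homomorphism: `ψ(e ⊔ f)` is the supremum of
    -- `ψ(e)` and `ψ(f)` in `M(X,Ω,E)`
    (∀ e f : E, MeasLE (psiMeas x e) (psiMeas x (e ⊔ f)) ∧
      MeasLE (psiMeas x f) (psiMeas x (e ⊔ f)) ∧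
      ∀ ρ : Set X → E, InSpanMeasures ρ → MeasLE (psiMeas x e) ρ →
        MeasLE (psiMeas x f) ρ → MeasLE (psiMeas x (e ⊔ f)) ρ) ∧
    -- `ψ` is isometric for the norm `‖μ‖ = ‖|μ|(X)‖`, using `|ψ(e)| = ψ(|e|)`
    (∀ e : E, ‖psiMeas x |e| Set.univ‖ = ‖e‖) ∧
    -- the image of `ψ` is an ideal ...
    (∀ (ν : Set X → E), InSpanMeasures ν → ∀ e : E, 0 ≤ e →
      (∀ Δ, MeasurableSet Δ → 0 ≤ ν Δ ∧ ν Δ ≤ psiMeas x e Δ) →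
      ∃ f : E, ∀ Δ, MeasurableSet Δ → ν Δ = psiMeas x f Δ) ∧
    -- ... which is order closed, hence a band: a supremum (in `M(X,Ω,E)`) of
    -- a set of elements of the image again lies in the image
    ∀ D : Set (Set X → E), D.Nonempty →
      (∀ ρ ∈ D, ∃ f : E, ∀ Δ, MeasurableSet Δ → ρ Δ = psiMeas x f Δ) →
      ∀ ξ : Set X → E, InSpanMeasures ξ → (∀ ρ ∈ D, MeasLE ρ ξ) →
        (∀ σ : Set X → E, InSpanMeasures σ → (∀ ρ ∈ D, MeasLE ρ σ) →
          MeasLE ξ σ) →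
        ∃ g : E, ∀ Δ, MeasurableSet Δ → ξ Δ = psiMeas x g Δ := by
  refine ⟨inSpanMeasures_psiMeas x, psiMeas_add x, psiMeas_smul x, fun e f => ?_,
    fun e => by simp [norm_abs_eq_norm], fun ν hν e _ => hν.exists_eq_psiMeas_of_le,
    fun D hD hDψ ξ hξ => hξ.exists_eq_psiMeas_of_isLUB hD hDψ⟩
  exact ⟨fun Δ _ => psiMeas_le_psiMeas le_sup_left Δ,
    fun Δ _ => psiMeas_le_psiMeas le_sup_right Δ, fun ρ _ => psiMeas_sup_le⟩

/-- for `X ≠ ∅`, a Dedekind complete Banach lattice `E` and a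
fixed `x ∈ X`, the map `ψ : e ↦ μ_e` is an isometric vector lattice
homomorphism of `E` into `M(X,Ω,E)` (normed by `‖μ‖ = ‖|μ|(X)‖`, and
`|ψ(e)| = ψ(|e|)`), whose image is a band. -/
theorem stmt_18
    (hDed : ∀ T : Set E, T.Nonempty → BddAbove T → ∃ a, IsLUB T a)
    (x : X) :
    -- `ψ` maps into `M(X,Ω,E)` and is linear
    (∀ e : E, InSpanMeasures (psiMeas x e)) ∧
    (∀ e f : E, ∀ Δ : Set X,
      psiMeas x (e + f) Δ = psiMeas x e Δ + psiMeas x f Δ) ∧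
    (∀ (c : ℝ) (e : E) (Δ : Set X), psiMeas x (c • e) Δ = c • psiMeas x e Δ) ∧
    -- `ψ` is a lattice homomorphism: `ψ(e ⊔ f)` is the supremum of
    -- `ψ(e)` and `ψ(f)` in `M(X,Ω,E)`
    (∀ e f : E, MeasLE (psiMeas x e) (psiMeas x (e ⊔ f)) ∧
      MeasLE (psiMeas x f) (psiMeas x (e ⊔ f)) ∧
      ∀ ρ : Set X → E, InSpanMeasures ρ → MeasLE (psiMeas x e) ρ →
        MeasLE (psiMeas x f) ρ → MeasLE (psiMeas x (e ⊔ f)) ρ) ∧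
    -- `ψ` is isometric for the norm `‖μ‖ = ‖|μ|(X)‖`, using `|ψ(e)| = ψ(|e|)`
    (∀ e : E, ‖psiMeas x |e| Set.univ‖ = ‖e‖) ∧
    -- the image of `ψ` is an ideal ...
    (∀ (ν : Set X → E), InSpanMeasures ν → ∀ e : E, 0 ≤ e →
      (∀ Δ, MeasurableSet Δ → 0 ≤ ν Δ ∧ ν Δ ≤ psiMeas x e Δ) →
      ∃ f : E, ∀ Δ, MeasurableSet Δ → ν Δ = psiMeas x f Δ) ∧
    -- ... which is order closed, hence a band: a supremum (in `M(X,Ω,E)`) of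
    -- a set of elements of the image again lies in the image
    ∀ D : Set (Set X → E), D.Nonempty →
      (∀ ρ ∈ D, ∃ f : E, ∀ Δ, MeasurableSet Δ → ρ Δ = psiMeas x f Δ) →
      ∀ ξ : Set X → E, InSpanMeasures ξ → (∀ ρ ∈ D, MeasLE ρ ξ) →
        (∀ σ : Set X → E, InSpanMeasures σ → (∀ ρ ∈ D, MeasLE ρ σ) →
          MeasLE ξ σ) →
        ∃ g : E, ∀ Δ, MeasurableSet Δ → ξ Δ = psiMeas x g Δ :=
  stmt_18_general x
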